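/- For any cardinal λ, the hyperspace exp(D^λ) of the Cantor cube with the Vietoris topology is universally Kuratowski-Ulam*: for every topological space X and every nowhere dense E ⊆ X × exp(D^λ), the set {x ∈ X : E_x is not nowhere dense in exp(D^λ)} is meager in X. -/

import Mathlib

open Set TopologicalSpace

variable (X : Type*) [TopologicalSpace X]

/-- A valid move of Player I: a finite family of nonempty open sets. -/
def IMove (A : Set (Set X)) : Prop :=
  A.Finite ∧ ∀ U ∈ A, IsOpen U ∧ U.Nonempty

/-- A valid response of Player II to the family `A`: a finite family of nonempty
open sets such that every member of `A` contains some member of `B`. -/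
def IIMove (A B : Set (Set X)) : Prop :=
  IMove X B ∧ ∀ U ∈ A, ∃ V ∈ B, V ⊆ U

/-- `X` is I-favorable: Player I has a winning strategy in the finite open-open
game. A strategy is a function from histories of Player II's moves to the next
move of Player I; it is winning if for every play in which Player II always
responds validly, each tail union of Player II's families is dense. -/
def IFavorable : Prop :=
  ∃ σ : List (Set (Set X)) → Set (Set X),
    (∀ hist, IMove X (σ hist)) ∧
    ∀ B : ℕ → Set (Set X),
      (∀ n, IIMove X (σ ((List.range n).map B)) (B n)) →
      ∀ k, Dense (⋃ (n : ℕ) (_ : k ≤ n), ⋃₀ B n)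

/-- Player II has a winning strategy in the finite open-open game: a function
from histories of Player I's moves to responses of Player II which are valid,
and such that whenever Player I plays validly, some tail union of Player II's
families fails to be dense. -/
def IIFavorable : Prop :=
  ∃ τ : List (Set (Set X)) → Set (Set X),
    ∀ A : ℕ → Set (Set X), (∀ n, IMove X (A n)) →
      (∀ n, IIMove X (A n) (τ ((List.range (n + 1)).map A))) ∧
      ∃ k, ¬ Dense (⋃ (n : ℕ) (_ : k ≤ n), ⋃₀ τ ((List.range (n + 1)).map A))

/-- `Q` is a π-base for `X`: a family of nonempty open sets such that every
nonempty open set contains a member of the family. -/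
def IsPiBase (Q : Set (Set X)) : Prop :=
  (∀ U ∈ Q, IsOpen U ∧ U.Nonempty) ∧
  ∀ V : Set X, IsOpen V → V.Nonempty → ∃ U ∈ Q, U ⊆ V

/-- `C` is a club filter with respect to the π-base `Q`. -/
def IsClubFilter (Q : Set (Set X)) (C : Set (Set (Set X))) : Prop :=
  (∀ P ∈ C, P.Countable ∧ P ⊆ Q) ∧
  (∀ P : ℕ → Set (Set X), (∀ n, P n ∈ C) → Monotone P → (⋃ n, P n) ∈ C) ∧
  (∀ A : Set (Set X), A.Countable → A ⊆ Q → ∃ P ∈ C, A ⊆ P) ∧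
  (∀ V : Set X, IsOpen V → V.Nonempty →
    ∀ P ∈ C, ∃ W ∈ P, ∀ U ∈ P, U ⊆ W → (U ∩ V).Nonempty)

/-- The hyperspace of nonempty closed subsets of `X`. -/
def Hyper (X : Type*) [TopologicalSpace X] : Type _ :=
  {A : Set X // IsClosed A ∧ A.Nonempty}

/-- The Vietoris basic open set `⟨V₁,…,Vₙ⟩` determined by a list of open sets:
all nonempty closed sets contained in the union and meeting each member. -/
def vietorisBasic {X : Type*} [TopologicalSpace X] (L : List (Set X)) :
    Set (Hyper X) :=
  {A | A.1 ⊆ ⋃₀ {V | V ∈ L} ∧ ∀ V ∈ L, (A.1 ∩ V).Nonempty}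

/-- The Vietoris topology on the hyperspace, generated by the basic sets
`⟨V₁,…,Vₙ⟩` for nonempty finite lists of open sets. -/
instance (X : Type*) [TopologicalSpace X] : TopologicalSpace (Hyper X) :=
  TopologicalSpace.generateFrom
    {S | ∃ L : List (Set X), L ≠ [] ∧ (∀ V ∈ L, IsOpen V) ∧ S = vietorisBasic L}

universe u

/-!
Let σ be a winning strategy of Player I on `Y` and `E ⊆ Z × Y` nowhere dense. Since `E` contains
no open rectangle, every nonempty open `U ⊆ Z` can be shrunk to `U'` for which Player II has a
legal answer `B` to σ with `U' × ⋃ B` disjoint from `E`. Iterating this inside maximal disjoint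
families gives a tree of open sets of `Z`, labelled by σ-plays, whose levels are dense open; so a
comeagre set of points `x` lies on an infinite branch. The play along that branch is won by σ,
hence its union is a dense open set missing the slice `E_x`, which is therefore nowhere dense.

For `exp(D^λ)`, the closed sets with the same image as `A` under restriction to a finite set `S`
of coordinates form an open set `⟨S, A⟩`, and by compactness these form a base. Player I assigns to
each answer `V` of Player II the coordinates `T` of some `⟨T, A'⟩ ⊆ V`, and plays every `⟨S', A⟩`
with `S'` among the coordinates recorded so far. Given `⟨S, A⟩ ⊆ U`, wait until every coordinate
of `S` that is ever recorded has been, and let `S'` be these: Player II's answer `V ⊆ ⟨S', A⟩`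
contains some `⟨T, A'⟩` with `S ∩ T ⊆ S'`, so `A` and `A'` have the same traces on `S ∩ T`, and
mixing their points coordinatewise gives a closed set in `⟨S, A⟩ ∩ ⟨T, A'⟩ ⊆ U ∩ V`.
-/

open Filter

theorem exists_pairwiseDisjoint_subfamily_inter_nonempty {ι Z : Type*} [TopologicalSpace Z]
    (f : ι → Set Z) (C : Set ι) (s : Set Z)
    (hC : ∀ V, IsOpen V → V.Nonempty → V ⊆ s → ∃ i ∈ C, (f i).Nonempty ∧ f i ⊆ V) :
    ∃ F ⊆ C, F.PairwiseDisjoint f ∧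
      ∀ V, IsOpen V → V.Nonempty → V ⊆ s → (V ∩ ⋃ i ∈ F, f i).Nonempty := by
  obtain ⟨F, ⟨hFC, hFdisj⟩, hFmax⟩ := zorn_subset {F | F ⊆ C ∧ F.PairwiseDisjoint f}
    fun c hc hchain => ⟨⋃₀ c, ⟨sUnion_subset fun F hF => (hc hF).1,
      (hchain.pairwiseDisjoint_sUnion f).2 fun F hF => (hc hF).2⟩, fun _ => subset_sUnion_of_mem⟩
  refine ⟨F, hFC, hFdisj, fun V hV hVne hVs => ?_⟩
  by_contra hmiss
  obtain ⟨i, hiC, hine, hiV⟩ := hC V hV hVne hVs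
  have hdisj : ∀ j ∈ F, Disjoint (f i) (f j) := fun j hj =>
    disjoint_left.2 fun z hzi hzj => hmiss ⟨z, hiV hzi, mem_biUnion hj hzj⟩
  have hiF : i ∈ F := hFmax ⟨insert_subset hiC hFC, hFdisj.insert fun j hj _ => hdisj j hj⟩
    (subset_insert i F) (mem_insert i F)
  exact hine.ne_empty (disjoint_self.1 (hdisj i hiF))

def treeLevel {N : Type*} (kids : N → Set N) (root : N) : ℕ → Set N
  | 0 => {root}
  | n + 1 => ⋃ p ∈ treeLevel kids root n, kids p

section TreeLevel

variable {Z N : Type*} {W : N → Set Z} {kids : N → Set N} {root : N}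

theorem pairwiseDisjoint_treeLevel (hsub : ∀ p, ∀ u ∈ kids p, W u ⊆ W p)
    (hdisj : ∀ p, (kids p).PairwiseDisjoint W) :
    ∀ n, (treeLevel kids root n).PairwiseDisjoint W
  | 0 => pairwiseDisjoint_singleton _ _
  | n + 1 => PairwiseDisjoint.biUnion
      ((pairwiseDisjoint_treeLevel hsub hdisj n).mono_on fun p _ => iUnion₂_subset (hsub p))
      fun p _ => hdisj p

theorem exists_branch_of_forall_mem_treeLevel (hsub : ∀ p, ∀ u ∈ kids p, W u ⊆ W p)
    (hdisj : ∀ p, (kids p).PairwiseDisjoint W) {x : Z}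
    (hx : ∀ n, ∃ t ∈ treeLevel kids root n, x ∈ W t) :
    ∃ t : ℕ → N, t 0 = root ∧ ∀ n, t (n + 1) ∈ kids (t n) ∧ x ∈ W (t n) := by
  choose t ht hxt using hx
  refine ⟨t, ht 0, fun n => ⟨?_, hxt n⟩⟩
  obtain ⟨p, hp, hpt⟩ := mem_iUnion₂.1 (ht (n + 1))
  obtain rfl : p = t n := (pairwiseDisjoint_treeLevel hsub hdisj n).elim_set hp (ht n) x
    (hsub p _ hpt (hxt (n + 1))) (hxt n)
  exact hpt

variable [TopologicalSpace Z]

theorem isOpen_of_mem_treeLevel (hroot : IsOpen (W root))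
    (hkids : ∀ p, ∀ u ∈ kids p, IsOpen (W u)) :
    ∀ n, ∀ t ∈ treeLevel kids root n, IsOpen (W t)
  | 0, _, rfl => hroot
  | _ + 1, _, ht => by
    obtain ⟨p, -, hp⟩ := mem_iUnion₂.1 ht
    exact hkids p _ hp

theorem dense_biUnion_treeLevel (hroot : W root = univ)
    (hkids : ∀ p, ∀ u ∈ kids p, IsOpen (W u))
    (hmeets : ∀ p V, IsOpen V → V.Nonempty → V ⊆ W p → (V ∩ ⋃ u ∈ kids p, W u).Nonempty) :
    ∀ n, Dense (⋃ t ∈ treeLevel kids root n, W t)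
  | 0 => by simp [treeLevel, hroot]
  | n + 1 => by
    refine dense_iff_inter_open.2 fun U hU hUne => ?_
    obtain ⟨x, hxU, hx⟩ := dense_iff_inter_open.1 (dense_biUnion_treeLevel hroot hkids hmeets n)
      U hU hUne
    obtain ⟨p, hp, hxp⟩ := mem_iUnion₂.1 hx
    have hWp := isOpen_of_mem_treeLevel (hroot ▸ isOpen_univ) hkids n p hp
    obtain ⟨y, hyU, hy⟩ := hmeets p (U ∩ W p) (hU.inter hWp) ⟨x, hxU, hxp⟩ inter_subset_right
    obtain ⟨u, hu, hyu⟩ := mem_iUnion₂.1 hy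
    exact ⟨y, hyU.1, mem_iUnion₂.2 ⟨u, mem_iUnion₂.2 ⟨p, hp, hu⟩, hyu⟩⟩

end TreeLevel

theorem eventually_residual_exists_branch {Z N : Type*} [TopologicalSpace Z] (W : N → Set Z)
    (Child : N → N → Prop) (root : N) (hroot : W root = univ)
    (hchild : ∀ s u, Child s u → IsOpen (W u) ∧ W u ⊆ W s)
    (hexists : ∀ s V, IsOpen V → V.Nonempty → V ⊆ W s →
      ∃ u, Child s u ∧ (W u).Nonempty ∧ W u ⊆ V) :
    ∀ᶠ x in residual Z, ∃ t : ℕ → N, t 0 = root ∧ ∀ n, Child (t n) (t (n + 1)) ∧ x ∈ W (t n) := by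
  choose kids hkids hdisj hmeets using fun s =>
    exists_pairwiseDisjoint_subfamily_inter_nonempty W {u | Child s u} (W s) (hexists s)
  have hopen : ∀ p, ∀ u ∈ kids p, IsOpen (W u) := fun p u hu => (hchild p u (hkids p hu)).1
  have hsub : ∀ p, ∀ u ∈ kids p, W u ⊆ W p := fun p u hu => (hchild p u (hkids p hu)).2
  have hlevels : ∀ᶠ x in residual Z, ∀ n, ∃ t ∈ treeLevel kids root n, x ∈ W t :=
    eventually_countable_forall.2 fun n => mem_of_superset (residual_of_dense_open
      (isOpen_biUnion (isOpen_of_mem_treeLevel (hroot ▸ isOpen_univ) hopen n))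
      (dense_biUnion_treeLevel hroot hopen hmeets n)) fun x hx => by simpa using hx
  filter_upwards [hlevels] with x hx
  obtain ⟨t, ht0, ht⟩ := exists_branch_of_forall_mem_treeLevel hsub hdisj hx
  exact ⟨t, ht0, fun n => ⟨hkids _ (ht n).1, (ht n).2⟩⟩

section Slices

variable {Y Z : Type*} [TopologicalSpace Y] [TopologicalSpace Z] {E : Set (Z × Y)}

theorem IsNowhereDense.exists_open_prod_disjoint (hE : IsNowhereDense E) {U : Set Z} {V : Set Y}
    (hU : IsOpen U) (hV : IsOpen V) (hUne : U.Nonempty) (hVne : V.Nonempty) :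
    ∃ U' ⊆ U, ∃ V' ⊆ V, IsOpen U' ∧ U'.Nonempty ∧ IsOpen V' ∧ V'.Nonempty ∧
      Disjoint (U' ×ˢ V') E := by
  have hUV : ¬ U ×ˢ V ⊆ closure E := fun h =>
    (hUne.prod hVne).ne_empty (subset_eq_empty (interior_maximal h (hU.prod hV)) hE)
  obtain ⟨p, hpUV, hpE⟩ := not_subset.1 hUV
  obtain ⟨U', V', hU', hV', hpU', hpV', hsub⟩ :=
    isOpen_prod_iff.1 ((hU.prod hV).sdiff isClosed_closure) p.1 p.2 ⟨hpUV, hpE⟩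
  exact ⟨U', fun z hz => (hsub (mk_mem_prod hz hpV')).1.1,
    V', fun y hy => (hsub (mk_mem_prod hpU' hy)).1.2, hU', ⟨_, hpU'⟩, hV', ⟨_, hpV'⟩,
    disjoint_left.2 fun q hq hqE => (hsub hq).2 (subset_closure hqE)⟩

theorem IsNowhereDense.exists_iiMove_prod_disjoint (hE : IsNowhereDense E) {A : Set (Set Y)}
    (hA : IMove Y A) {U : Set Z} (hU : IsOpen U) (hUne : U.Nonempty) :
    ∃ U' ⊆ U, IsOpen U' ∧ U'.Nonempty ∧ ∃ B, IIMove Y A B ∧ Disjoint (U' ×ˢ ⋃₀ B) E := by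
  obtain ⟨hAfin, hAopen⟩ := hA
  induction A, hAfin using Set.Finite.induction_on generalizing U with
  | empty => exact ⟨U, subset_rfl, hU, hUne, ∅, ⟨⟨finite_empty, by simp⟩, by simp⟩, by simp⟩
  | @insert V A _ _ ih =>
    obtain ⟨hV, hVne⟩ := hAopen V (mem_insert V A)
    obtain ⟨U₁, hU₁U, hU₁, hU₁ne, B, ⟨⟨hBfin, hBopen⟩, hBA⟩, hBE⟩ :=
      ih hU hUne fun V' hV' => hAopen V' (mem_insert_of_mem V hV')
    obtain ⟨U', hU'U₁, V', hV'V, hU', hU'ne, hV', hV'ne, hV'E⟩ :=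
      hE.exists_open_prod_disjoint hU₁ hV hU₁ne hVne
    refine ⟨U', hU'U₁.trans hU₁U, hU', hU'ne, insert V' B, ⟨⟨hBfin.insert V', ?_⟩, ?_⟩, ?_⟩
    · rintro V'' (rfl | hV'')
      exacts [⟨hV', hV'ne⟩, hBopen V'' hV'']
    · rintro V'' (rfl | hV'')
      · exact ⟨V', mem_insert V' B, hV'V⟩
      · obtain ⟨V₀, hV₀, hV₀V''⟩ := hBA V'' hV''
        exact ⟨V₀, mem_insert_of_mem V' hV₀, hV₀V''⟩
    · rw [sUnion_insert, prod_union, disjoint_union_left]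
      exact ⟨hV'E, hBE.mono_left (prod_mono hU'U₁ subset_rfl)⟩

theorem IFavorable.isMeagre_setOf_not_isNowhereDense (hY : IFavorable Y)
    (hE : IsNowhereDense E) : IsMeagre {x | ¬ IsNowhereDense {y | (x, y) ∈ E}} := by
  obtain ⟨σ, hσ, hσwins⟩ := hY
  let Child (s u : Set Z × List (Set (Set Y))) : Prop := IsOpen u.1 ∧ u.1 ⊆ s.1 ∧
    ∃ B, IIMove Y (σ s.2) B ∧ u.2 = s.2 ++ [B] ∧ Disjoint (u.1 ×ˢ ⋃₀ B) E
  have hbranch := eventually_residual_exists_branch Prod.fst Child (univ, []) rfl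
    (fun _ _ h => ⟨h.1, h.2.1⟩) fun s V hV hVne hVs => by
      obtain ⟨U', hU'V, hU', hU'ne, B, hB, hBE⟩ := hE.exists_iiMove_prod_disjoint (hσ s.2) hV hVne
      exact ⟨(U', s.2 ++ [B]), ⟨hU', hU'V.trans hVs, B, hB, rfl, hBE⟩, hU'ne, hU'V⟩
  refine hbranch.mono fun x ⟨t, ht0, ht⟩ => not_not.2 ?_
  choose B hBmove hBhist hBE using fun n => (ht n).1.2.2
  have hhist : ∀ n, (t n).2 = (List.range n).map B := by
    intro n
    induction n with
    | zero => simp [ht0]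
    | succ n ih => rw [hBhist n, ih, List.range_succ, List.map_append]; rfl
  have hplay : ∀ n, IIMove Y (σ ((List.range n).map B)) (B n) := fun n => hhist n ▸ hBmove n
  set D := ⋃ (n : ℕ) (_ : 0 ≤ n), ⋃₀ B n
  have hD : IsOpen D := isOpen_biUnion fun n _ => isOpen_sUnion fun V hV => ((hplay n).1.2 V hV).1
  refine (isClosed_isNowhereDense_iff_compl (s := Dᶜ)).2 ⟨?_, ?_⟩ |>.2.mono ?_
  · rwa [compl_compl]
  · rw [compl_compl]; exact hσwins B hplay 0
  · intro y hy hyD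
    obtain ⟨n, -, hyn⟩ := mem_iUnion₂.1 hyD
    exact disjoint_left.1 (hBE n) (mk_mem_prod (ht (n + 1)).2 hyn) hy

end Slices

theorem isOpen_setOf_subset_sUnion_and_inter_nonempty {Y : Type*} [TopologicalSpace Y]
    {𝒱 : Set (Set Y)} (hfin : 𝒱.Finite) (hne : 𝒱.Nonempty) (hopen : ∀ V ∈ 𝒱, IsOpen V) :
    IsOpen {A : Hyper Y | A.1 ⊆ ⋃₀ 𝒱 ∧ ∀ V ∈ 𝒱, (A.1 ∩ V).Nonempty} := by
  refine isOpen_generateFrom_of_mem ⟨hfin.toFinset.toList, ?_, ?_, ?_⟩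
  · simpa using hne.ne_empty
  · simpa using hopen
  · ext A; simp [vietorisBasic]

section Traces

variable {ι α : Type*}

theorem restrict_piecewise_of_restrict_inter_eq [DecidableEq ι] {S S' : Finset ι} {a a' : ι → α}
    (h : (S ∩ S').restrict a = (S ∩ S').restrict a') :
    S.restrict (S.piecewise a a') = S.restrict a ∧
      S'.restrict (S.piecewise a a') = S'.restrict a' := by
  refine ⟨funext fun i => S.piecewise_eq_of_mem _ _ i.2, funext fun ⟨i, hi⟩ => ?_⟩
  by_cases hiS : i ∈ S
  · simpa [hiS] using congrFun h ⟨i, Finset.mem_inter.2 ⟨hiS, hi⟩⟩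
  · simp [hiS]

variable [TopologicalSpace α]

theorem IsCompact.eventually_restrict_eq_imp_mem {K V : Set (ι → α)} (hK : IsCompact K)
    (hV : IsOpen V) (hKV : K ⊆ V) :
    ∀ᶠ S : Finset ι in atTop, ∀ x ∈ K, ∀ y, S.restrict y = S.restrict x → y ∈ V := by
  refine hK.induction_on (.of_forall fun _ _ h => h.elim)
    (fun _ _ hst ht => ht.mono fun _ h x hx => h x (hst hx))
    (fun _ _ hs ht => (hs.and ht).mono fun _ h x hx => hx.elim (h.1 x) (h.2 x))
    fun x hx => ?_
  obtain ⟨I, u, hu, hIV⟩ := isOpen_pi_iff.1 hV x (hKV hx)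
  refine ⟨(I : Set ι).pi u, mem_nhdsWithin_of_mem_nhds
      (set_pi_mem_nhds I.finite_toSet fun i hi => (hu i hi).1.mem_nhds (hu i hi).2),
    (eventually_ge_atTop I).mono fun S hIS x' hx' y hy => hIV fun i hi => ?_⟩
  rw [show y i = x' i from congrFun hy ⟨i, hIS hi⟩]
  exact hx' i hi

def traceNbhd (S : Finset ι) (A : Hyper (ι → α)) : Set (Hyper (ι → α)) :=
  {B | S.restrict '' B.1 = S.restrict '' A.1}

theorem mem_traceNbhd_self (S : Finset ι) (A : Hyper (ι → α)) : A ∈ traceNbhd S A := rfl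

theorem traceNbhd_anti {S S' : Finset ι} (h : S ⊆ S') (A : Hyper (ι → α)) :
    traceNbhd S' A ⊆ traceNbhd S A := fun B (hB : S'.restrict '' B.1 = S'.restrict '' A.1) => by
  change S.restrict '' B.1 = S.restrict '' A.1
  rw [← Finset.restrict₂_comp_restrict h, image_comp, image_comp, hB]

theorem finite_range_traceNbhd [Finite α] (S : Finset ι) :
    (range (traceNbhd (α := α) S)).Finite :=
  (finite_range fun T => {B : Hyper (ι → α) | S.restrict '' B.1 = T}).subset <|
    range_subset_iff.2 fun _ => ⟨_, rfl⟩

theorem eventually_traceNbhd_subset_vietorisBasic [CompactSpace α] {L : List (Set (ι → α))}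
    (hL : ∀ V ∈ L, IsOpen V) {A : Hyper (ι → α)} (hA : A ∈ vietorisBasic L) :
    ∀ᶠ S in atTop, traceNbhd S A ⊆ vietorisBasic L := by
  have hcover := A.2.1.isCompact.eventually_restrict_eq_imp_mem
    (isOpen_sUnion fun V hV => hL V hV) hA.1
  have hmeet : ∀ᶠ S : Finset ι in atTop, ∀ V ∈ {V | V ∈ L},
      ∃ a ∈ A.1, ∀ y, S.restrict y = S.restrict a → y ∈ V := by
    refine (eventually_all_finite (List.finite_toSet L)).2 fun V hV => ?_
    obtain ⟨a, haA, haV⟩ := hA.2 V hV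
    exact (isCompact_singleton.eventually_restrict_eq_imp_mem (hL V hV)
      (singleton_subset_iff.2 haV)).mono fun S h => ⟨a, haA, h a rfl⟩
  filter_upwards [hcover, hmeet] with S hcover hmeet B hB
  refine ⟨fun b hb => ?_, fun V hV => ?_⟩
  · obtain ⟨a, haA, hab⟩ : S.restrict b ∈ S.restrict '' A.1 := hB ▸ mem_image_of_mem _ hb
    exact hcover a haA b hab.symm
  · obtain ⟨a, haA, ha⟩ := hmeet V hV
    obtain ⟨b, hbB, hba⟩ : S.restrict a ∈ S.restrict '' B.1 := hB ▸ mem_image_of_mem _ haA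
    exact ⟨b, hbB, ha b hba⟩

theorem eventually_traceNbhd_subset [CompactSpace α] {O : Set (Hyper (ι → α))} (hO : IsOpen O)
    {A : Hyper (ι → α)} (hA : A ∈ O) : ∀ᶠ S in atTop, traceNbhd S A ⊆ O := by
  induction hO generalizing A with
  | basic U hU =>
    obtain ⟨L, -, hL, rfl⟩ := hU
    exact eventually_traceNbhd_subset_vietorisBasic hL hA
  | univ => exact .of_forall fun _ => subset_univ _
  | inter U V _ _ hU hV =>
    filter_upwards [hU hA.1, hV hA.2] with S hSU hSV using subset_inter hSU hSV
  | sUnion 𝒰 _ h𝒰 =>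
    obtain ⟨U, hU, hAU⟩ := hA
    exact (h𝒰 U hU hAU).mono fun S h => h.trans (subset_sUnion_of_mem hU)

variable [DiscreteTopology α]

theorem isOpen_traceNbhd [Finite α] (S : Finset ι) (A : Hyper (ι → α)) :
    IsOpen (traceNbhd S A) := by
  let 𝒱 : Set (Set (ι → α)) := (fun t => S.restrict ⁻¹' {t}) '' (S.restrict '' A.1)
  have h𝒱 : IsOpen {B : Hyper (ι → α) | B.1 ⊆ ⋃₀ 𝒱 ∧ ∀ V ∈ 𝒱, (B.1 ∩ V).Nonempty} :=
    isOpen_setOf_subset_sUnion_and_inter_nonempty ((toFinite _).image _) ((A.2.2.image _).image _)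
      (forall_mem_image.2 fun t _ => (isOpen_discrete {t}).preimage (Finset.continuous_restrict S))
  convert h𝒱 using 1
  ext B
  have hcover : ⋃₀ 𝒱 = S.restrict ⁻¹' (S.restrict '' A.1) := by
    simp only [𝒱, sUnion_image, ← preimage_iUnion₂, biUnion_of_singleton]
  have hmeet : ∀ t, (B.1 ∩ S.restrict ⁻¹' {t}).Nonempty ↔ t ∈ S.restrict '' B.1 := fun t =>
    ⟨fun ⟨b, hb, hbt⟩ => ⟨b, hb, hbt⟩, fun ⟨b, hb, hbt⟩ => ⟨b, hb, hbt⟩⟩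
  simp only [traceNbhd, mem_ofPred_eq, hcover, ← image_subset_iff, 𝒱, forall_mem_image, hmeet]
  exact subset_antisymm_iff.trans (and_congr_right' image_subset_iff)

theorem exists_mem_traceNbhd_inter [DecidableEq ι] {S S' : Finset ι} {A A' : Hyper (ι → α)}
    (h : (S ∩ S').restrict '' A.1 = (S ∩ S').restrict '' A'.1) :
    (traceNbhd S A ∩ traceNbhd S' A').Nonempty := by
  set C : Set (ι → α) := S.restrict ⁻¹' (S.restrict '' A.1) ∩ S'.restrict ⁻¹' (S'.restrict '' A'.1)
  have hC : IsClosed C := ((isClosed_discrete _).preimage (Finset.continuous_restrict S)).inter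
    ((isClosed_discrete _).preimage (Finset.continuous_restrict S'))
  have hmix : ∀ a ∈ A.1, ∀ a' ∈ A'.1, (S ∩ S').restrict a = (S ∩ S').restrict a' →
      ∃ x ∈ C, S.restrict x = S.restrict a ∧ S'.restrict x = S'.restrict a' :=
    fun a ha a' ha' haa' => let ⟨h₁, h₂⟩ := restrict_piecewise_of_restrict_inter_eq haa'
      ⟨_, ⟨⟨a, ha, h₁.symm⟩, ⟨a', ha', h₂.symm⟩⟩, h₁, h₂⟩
  have hpartner : ∀ a ∈ A.1, (S ∩ S').restrict a ∈ (S ∩ S').restrict '' A'.1 := fun a ha =>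
    h ▸ mem_image_of_mem _ ha
  have hpartner' : ∀ a' ∈ A'.1, (S ∩ S').restrict a' ∈ (S ∩ S').restrict '' A.1 := fun a' ha' =>
    h.symm ▸ mem_image_of_mem _ ha'
  obtain ⟨a, ha⟩ := A.2.2
  obtain ⟨a', ha', ha'a⟩ := hpartner a ha
  obtain ⟨x, hxC, -⟩ := hmix a ha a' ha' ha'a.symm
  refine ⟨⟨C, hC, x, hxC⟩, subset_antisymm ?_ ?_, subset_antisymm ?_ ?_⟩
  · rintro _ ⟨x, hx, rfl⟩
    exact hx.1
  · rintro _ ⟨a, ha, rfl⟩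
    obtain ⟨a', ha', ha'a⟩ := hpartner a ha
    obtain ⟨x, hx, hxa, -⟩ := hmix a ha a' ha' ha'a.symm
    exact ⟨x, hx, hxa⟩
  · rintro _ ⟨x, hx, rfl⟩
    exact hx.2
  · rintro _ ⟨a', ha', rfl⟩
    obtain ⟨a, ha, haa'⟩ := hpartner' a' ha'
    obtain ⟨x, hx, -, hxa'⟩ := hmix a ha a' ha' haa'
    exact ⟨x, hx, hxa'⟩

end Traces

section TraceStrategy

variable {ι α : Type*} [TopologicalSpace α] (coord : Set (Hyper (ι → α)) → Finset ι)

def recordedCoords (h : List (Set (Set (Hyper (ι → α))))) : Set ι :=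
  ⋃ B ∈ h, ⋃ V ∈ B, (coord V : Set ι)

theorem recordedCoords_mono {h h' : List (Set (Set (Hyper (ι → α))))} (hh' : h ⊆ h') :
    recordedCoords coord h ⊆ recordedCoords coord h' :=
  biUnion_subset_biUnion_left hh'

theorem coord_subset_recordedCoords {h : List (Set (Set (Hyper (ι → α))))} {B V}
    (hB : B ∈ h) (hV : V ∈ B) : (coord V : Set ι) ⊆ recordedCoords coord h :=
  (subset_iUnion₂ (s := fun V (_ : V ∈ B) => (coord V : Set ι)) V hV).trans <|
    subset_iUnion₂ (s := fun B (_ : B ∈ h) => ⋃ V ∈ B, (coord V : Set ι)) B hB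

theorem recordedCoords_finite {h : List (Set (Set (Hyper (ι → α))))} (hh : ∀ B ∈ h, B.Finite) :
    (recordedCoords coord h).Finite :=
  (List.finite_toSet h).biUnion fun B hB => (hh B hB).biUnion fun _ _ => Finset.finite_toSet _

/-- The finiteness guard keeps the move finite on histories that are not legal plays. -/
def traceStrategy (h : List (Set (Set (Hyper (ι → α))))) : Set (Set (Hyper (ι → α))) :=
  ⋃ (S : Finset ι) (_ : (recordedCoords coord h).Finite ∧ ↑S ⊆ recordedCoords coord h),
    range (traceNbhd S)

theorem iMove_traceStrategy [DiscreteTopology α] [Finite α] (h : List (Set (Set (Hyper (ι → α))))) :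
    IMove (Hyper (ι → α)) (traceStrategy coord h) := by
  refine ⟨?_, ?_⟩
  · by_cases hR : (recordedCoords coord h).Finite
    · refine ((hR.finite_subsets.preimage Finset.coe_injective.injOn).biUnion
        fun S _ => finite_range_traceNbhd S).subset ?_
      exact iUnion₂_mono' fun S hS => ⟨S, hS.2, subset_rfl⟩
    · simp [traceStrategy, hR]
  · simp only [traceStrategy, mem_iUnion, mem_range]
    rintro _ ⟨S, -, A, rfl⟩
    exact ⟨isOpen_traceNbhd S A, A, mem_traceNbhd_self S A⟩

theorem dense_traceStrategy_play [DiscreteTopology α] [Finite α]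
    (hcoord : ∀ V, IsOpen V → V.Nonempty → ∃ A ∈ V, traceNbhd (coord V) A ⊆ V)
    {B : ℕ → Set (Set (Hyper (ι → α)))}
    (hB : ∀ n, IIMove _ (traceStrategy coord ((List.range n).map B)) (B n)) (k : ℕ) :
    Dense (⋃ (n : ℕ) (_ : k ≤ n), ⋃₀ B n) := by
  classical
  set R : ℕ → Set ι := fun n => recordedCoords coord ((List.range n).map B)
  have hRmono : Monotone R := fun m n hmn =>
    recordedCoords_mono coord (List.map_subset B (List.range_subset.2 hmn))
  have hRfin : ∀ n, (R n).Finite := fun n => recordedCoords_finite coord fun B' hB' => by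
    obtain ⟨m, -, rfl⟩ := List.mem_map.1 hB'
    exact (hB m).1.1
  have hcoordR : ∀ n, ∀ V ∈ B n, (coord V : Set ι) ⊆ R (n + 1) := fun n V hV =>
    coord_subset_recordedCoords coord (List.mem_map.2 ⟨n, List.mem_range.2 n.lt_succ_self, rfl⟩) hV
  refine dense_iff_inter_open.2 fun U hU ⟨A, hAU⟩ => ?_
  obtain ⟨S, hS⟩ := (eventually_traceNbhd_subset hU hAU).exists
  obtain ⟨n, hnS, hkn⟩ : ∃ n, (∀ i ∈ S, (∃ m, i ∈ R m) → i ∈ R n) ∧ k ≤ n := by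
    refine ((S.eventually_all.2 fun i _ => ?_).and (eventually_ge_atTop k)).exists
    by_cases hi : ∃ m, i ∈ R m
    · obtain ⟨m, hm⟩ := hi
      exact (eventually_ge_atTop m).mono fun n hmn _ => hRmono hmn hm
    · exact .of_forall fun _ hi' => (hi hi').elim
  set S' := S.filter (· ∈ R n)
  have hmove : traceNbhd S' A ∈ traceStrategy coord ((List.range n).map B) :=
    mem_iUnion₂.2 ⟨S', ⟨hRfin n, fun i hi => (Finset.mem_filter.1 hi).2⟩, A, rfl⟩
  obtain ⟨V, hVB, hVS'⟩ := (hB n).2 _ hmove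
  obtain ⟨hV, hVne⟩ := (hB n).1.2 V hVB
  obtain ⟨A', hA'V, hA'⟩ := hcoord V hV hVne
  have hinter : S ∩ coord V ⊆ S' := fun i hi =>
    have ⟨hiS, hiV⟩ := Finset.mem_inter.1 hi
    Finset.mem_filter.2 ⟨hiS, hnS i hiS ⟨n + 1, hcoordR n V hVB hiV⟩⟩
  obtain ⟨C, hCS, hCV⟩ := exists_mem_traceNbhd_inter (traceNbhd_anti hinter A (hVS' hA'V)).symm
  exact ⟨C, hS hCS, mem_iUnion₂.2 ⟨n, hkn, V, hVB, hA' hCV⟩⟩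

end TraceStrategy

theorem iFavorable_hyper_pi {ι α : Type*} [TopologicalSpace α] [DiscreteTopology α] [Finite α] :
    IFavorable (Hyper (ι → α)) := by
  have (V : Set (Hyper (ι → α))) :
      ∃ S : Finset ι, IsOpen V → V.Nonempty → ∃ A ∈ V, traceNbhd S A ⊆ V := by
    by_cases hV : IsOpen V ∧ V.Nonempty
    · obtain ⟨A, hA⟩ := hV.2
      obtain ⟨S, hS⟩ := (eventually_traceNbhd_subset hV.1 hA).exists
      exact ⟨S, fun _ _ => ⟨A, hA, hS⟩⟩
    · exact ⟨∅, fun h h' => (hV ⟨h, h'⟩).elim⟩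
  choose coord hcoord using this
  exact ⟨traceStrategy coord, iMove_traceStrategy coord,
    fun _ hB => dense_traceStrategy_play coord hcoord hB⟩

/-- For any index set `λ`, the hyperspace `exp (D^λ)` of the Cantor cube with
the Vietoris topology is universally Kuratowski-Ulam*. -/
theorem hyper_cantorCube_uKUstar (lam : Type*) :
    ∀ (Z : Type u) [TopologicalSpace Z]
      (E : Set (Z × Hyper (lam → Bool))), IsNowhereDense E →
        IsMeagre {x : Z |
          ¬ IsNowhereDense {z : Hyper (lam → Bool) | (x, z) ∈ E}} := by
  intro Z _ E hE
  exact iFavorable_hyper_pi.isMeagre_setOf_not_isNowhereDense hE
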